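/- arXiv:2003.04069 — 6 statements merged into one kernel-verified Lean document; each statement's English description precedes it below -/
import Mathlib

section
/- For the learning rates α_t = (H+1)/(H+t) with H ≥ 1, define α_t^i = α_i ∏_{j=i+1}^t (1-α_j) for 1 ≤ i ≤ t. Then for every t ≥ 1, 1/√t ≤ ∑_{i=1}^t α_t^i/√i ≤ 2/√t. -/
/-!
With `α 1 = 1` and `0 ≤ α j ≤ 1`, the weights `α_t^i` form a probability vector on `{1, …, t}`
(they satisfy `α_{t+1}^i = (1 - α_{t+1}) α_t^i` and `α_{t+1}^{t+1} = α_{t+1}`), so averaging the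
decreasing sequence `1/√i` gives at least `1/√t`. For the upper bound, `S_t = ∑ α_t^i / √i` obeys
`S_{t+1} = (1 - α_{t+1}) S_t + α_{t+1} / √(t+1)`, and `2/√t` is a supersolution of this recursion
thanks to `2 √t √(t+1) ≤ 2t + 1`; induction on `t` concludes.
-/
open Finset Real

noncomputable def learningWeight (α : ℕ → ℝ) (t i : ℕ) : ℝ :=
  α i * ∏ j ∈ Icc (i + 1) t, (1 - α j)

namespace learningWeight

variable {α : ℕ → ℝ}

@[simp]
lemma self (α : ℕ → ℝ) (t : ℕ) : learningWeight α t t = α t := by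
  simp [learningWeight]

lemma nonneg (hα0 : ∀ j, 0 ≤ α j) (hα_le : ∀ j, 1 ≤ j → α j ≤ 1) (t i : ℕ) :
    0 ≤ learningWeight α t i :=
  mul_nonneg (hα0 i) <| prod_nonneg fun j hj ↦
    sub_nonneg.mpr (hα_le j (by simp at hj; omega))

lemma sum_mul_succ (α g : ℕ → ℝ) (t : ℕ) :
    ∑ i ∈ Icc 1 (t + 1), learningWeight α (t + 1) i * g i
      = (1 - α (t + 1)) * ∑ i ∈ Icc 1 t, learningWeight α t i * g i + α (t + 1) * g (t + 1) := by
  rw [sum_Icc_succ_top (by omega), self, mul_sum]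
  congr 1
  refine sum_congr rfl fun i hi ↦ ?_
  rw [learningWeight, learningWeight, prod_Icc_succ_top (by simp at hi; omega)]
  ring

lemma sum_eq_one (hα_one : α 1 = 1) {t : ℕ} (ht : 1 ≤ t) :
    ∑ i ∈ Icc 1 t, learningWeight α t i = 1 := by
  induction t, ht using Nat.le_induction with
  | base => simp [hα_one]
  | succ t _ ih => simpa [ih] using sum_mul_succ α 1 t

lemma le_sum_mul (hα0 : ∀ j, 0 ≤ α j) (hα_le : ∀ j, 1 ≤ j → α j ≤ 1) (hα_one : α 1 = 1)
    {g : ℕ → ℝ} {t : ℕ} (ht : 1 ≤ t) (hg : ∀ i ∈ Icc 1 t, g t ≤ g i) :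
    g t ≤ ∑ i ∈ Icc 1 t, learningWeight α t i * g i :=
  calc g t = ∑ i ∈ Icc 1 t, learningWeight α t i * g t := by
        rw [← sum_mul, sum_eq_one hα_one ht, one_mul]
    _ ≤ _ := sum_le_sum fun i hi ↦
      mul_le_mul_of_nonneg_left (hg i hi) (nonneg hα0 hα_le t i)

lemma sum_mul_le (hα_le : ∀ j, 1 ≤ j → α j ≤ 1) (hα_one : α 1 = 1) {f g : ℕ → ℝ}
    (hbase : g 1 ≤ f 1)
    (hstep : ∀ t, 1 ≤ t → (1 - α (t + 1)) * f t + α (t + 1) * g (t + 1) ≤ f (t + 1))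
    {t : ℕ} (ht : 1 ≤ t) :
    ∑ i ∈ Icc 1 t, learningWeight α t i * g i ≤ f t := by
  induction t, ht using Nat.le_induction with
  | base => simpa [hα_one] using hbase
  | succ t ht ih =>
    rw [sum_mul_succ]
    exact le_trans (by gcongr; linarith [hα_le (t + 1) (by omega)]) (hstep t ht)

end learningWeight

lemma two_div_sqrt_step_le {H t : ℝ} (hH : 0 ≤ H) (ht : 0 < t) :
    (1 - (H + 1) / (H + (t + 1))) * (2 / √t) + (H + 1) / (H + (t + 1)) * (√(t + 1))⁻¹
      ≤ 2 / √(t + 1) := by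
  have hs : 0 < √t := sqrt_pos.mpr ht
  have hu : 0 < √(t + 1) := sqrt_pos.mpr (by linarith)
  have hAM : 2 * (√t * √(t + 1)) ≤ 2 * t + 1 := by
    nlinarith [sq_nonneg (√t - √(t + 1)), sq_sqrt ht.le, sq_sqrt (by linarith : 0 ≤ t + 1)]
  have key : 2 * t * √(t + 1) ≤ (2 * t + H + 1) * √t := by
    nlinarith [mul_le_mul_of_nonneg_left hAM hs.le, sq_sqrt ht.le]
  field_simp
  nlinarith

theorem stmt0_general (H : ℕ)
    (α : ℕ → ℝ) (hα : ∀ t : ℕ, α t = (H + 1) / (H + t))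
    (w : ℕ → ℕ → ℝ)
    (hw : ∀ t i : ℕ, w t i = α i * ∏ j ∈ Finset.Icc (i + 1) t, (1 - α j)) :
    ∀ t : ℕ, 1 ≤ t →
      1 / Real.sqrt t ≤ ∑ i ∈ Finset.Icc 1 t, w t i / Real.sqrt i ∧
      ∑ i ∈ Finset.Icc 1 t, w t i / Real.sqrt i ≤ 2 / Real.sqrt t := by
  intro t ht
  obtain rfl : w = learningWeight α := funext₂ hw
  have hα0 : ∀ j, 0 ≤ α j := fun j ↦ by rw [hα]; positivity
  have hα_le : ∀ j, 1 ≤ j → α j ≤ 1 := fun j hj ↦ by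
    have : (1 : ℝ) ≤ j := by exact_mod_cast hj
    rw [hα]
    exact div_le_one_of_le₀ (by linarith) (by positivity)
  have hα_one : α 1 = 1 := by rw [hα]; push_cast; exact div_self (by positivity)
  simp only [div_eq_mul_inv, one_mul]
  refine ⟨learningWeight.le_sum_mul (g := fun i ↦ (√i)⁻¹) hα0 hα_le hα_one ht fun i hi ↦ ?_,
    learningWeight.sum_mul_le (f := fun t ↦ 2 * (√t)⁻¹) hα_le hα_one (by simp) (fun s hs ↦ ?_) ht⟩
  · have hi := mem_Icc.mp hi
    have hi1 : (1 : ℝ) ≤ i := by exact_mod_cast hi.1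
    have hit : (i : ℝ) ≤ t := by exact_mod_cast hi.2
    gcongr
  · have hs' : (0 : ℝ) < s := by exact_mod_cast hs
    simpa [hα, add_assoc, div_eq_mul_inv] using two_div_sqrt_step_le (Nat.cast_nonneg H) hs'

theorem stmt0 (H : ℕ) (hH : 1 ≤ H)
    (α : ℕ → ℝ) (hα : ∀ t : ℕ, α t = (H + 1) / (H + t))
    (w : ℕ → ℕ → ℝ)
    (hw : ∀ t i : ℕ, w t i = α i * ∏ j ∈ Finset.Icc (i + 1) t, (1 - α j)) :
    ∀ t : ℕ, 1 ≤ t →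
      1 / Real.sqrt t ≤ ∑ i ∈ Finset.Icc 1 t, w t i / Real.sqrt i ∧
      ∑ i ∈ Finset.Icc 1 t, w t i / Real.sqrt i ≤ 2 / Real.sqrt t :=
  stmt0_general H α hα w hw
end

section
/- For the learning rates α_t = (H+1)/(H+t) with H ≥ 1 and weights α_t^i = α_i ∏_{j=i+1}^t (1-α_j), for every t ≥ 1 we have max_{1 ≤ i ≤ t} α_t^i ≤ 2H/t and ∑_{i=1}^t (α_t^i)^2 ≤ 2H/t. -/
/-! The weights `α_t^i` sum to `1`, because `α_1 = 1` makes the sum telescope, and they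
increase in `i`, because `α_i (1 - α_{i+1}) ≤ α_{i+1}`. Hence the largest weight is
`α_t^t = α_t ≤ 2H/t`, and `∑ (α_t^i)^2 ≤ α_t ∑ α_t^i = α_t`. -/

open Finset

namespace LearningRate

def weight {R : Type*} [CommRing R] (a : ℕ → R) (t i : ℕ) : R :=
  a i * ∏ j ∈ Icc (i + 1) t, (1 - a j)

section CommRing

variable {R : Type*} [CommRing R] (a : ℕ → R)

lemma weight_self (t : ℕ) : weight a t t = a t := by
  simp [weight]

lemma weight_succ_right {t i : ℕ} (hi : i ≤ t) :
    weight a (t + 1) i = weight a t i * (1 - a (t + 1)) := by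
  rw [weight, weight, prod_Icc_succ_top (by omega), mul_assoc]

lemma sum_weight (t : ℕ) :
    ∑ i ∈ Icc 1 t, weight a t i = 1 - ∏ j ∈ Icc 1 t, (1 - a j) := by
  induction t with
  | zero => simp
  | succ t ih =>
    rw [sum_Icc_succ_top (by omega), weight_self,
      sum_congr rfl fun i hi => weight_succ_right a (mem_Icc.mp hi).2, ← sum_mul, ih,
      prod_Icc_succ_top (by omega)]
    ring

lemma sum_weight_eq_one (h1 : a 1 = 1) {t : ℕ} (ht : 1 ≤ t) :
    ∑ i ∈ Icc 1 t, weight a t i = 1 := by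
  rw [sum_weight, prod_eq_zero (mem_Icc.mpr ⟨le_rfl, ht⟩) (by rw [h1, sub_self]), sub_zero]

end CommRing

section Ordered

variable {a : ℕ → ℝ} (h0 : ∀ i, 0 ≤ a i) (h1 : ∀ i, 1 ≤ i → a i ≤ 1)
include h0 h1

lemma weight_nonneg (t : ℕ) {i : ℕ} (hi : 1 ≤ i) : 0 ≤ weight a t i :=
  mul_nonneg (h0 i) <| prod_nonneg fun j hj =>
    sub_nonneg.mpr <| h1 j (by have := (mem_Icc.mp hj).1; omega)

omit h0 in
lemma weight_le (hstep : ∀ i, 1 ≤ i → a i * (1 - a (i + 1)) ≤ a (i + 1)) :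
    ∀ t, ∀ i ∈ Icc 1 t, weight a t i ≤ a t := by
  intro t
  induction t with
  | zero => simp
  | succ t ih =>
    intro i hi
    obtain ⟨hi1, hit⟩ := mem_Icc.mp hi
    rcases Nat.lt_or_ge t i with hti | hit'
    · rw [show i = t + 1 by omega, weight_self]
    · have hnext : 0 ≤ 1 - a (t + 1) := sub_nonneg.mpr (h1 _ (by omega))
      calc weight a (t + 1) i = weight a t i * (1 - a (t + 1)) := weight_succ_right a hit'
        _ ≤ a t * (1 - a (t + 1)) :=
          mul_le_mul_of_nonneg_right (ih i (mem_Icc.mpr ⟨hi1, hit'⟩)) hnext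
        _ ≤ a (t + 1) := hstep t (by omega)

end Ordered

lemma sum_sq_le_of_le {ι : Type*} (s : Finset ι) {w : ι → ℝ} {M : ℝ}
    (hw0 : ∀ i ∈ s, 0 ≤ w i) (hwM : ∀ i ∈ s, w i ≤ M) (hsum : ∑ i ∈ s, w i = 1) :
    ∑ i ∈ s, w i ^ 2 ≤ M :=
  calc ∑ i ∈ s, w i ^ 2 ≤ ∑ i ∈ s, M * w i :=
        sum_le_sum fun i hi => by rw [sq]; exact mul_le_mul_of_nonneg_right (hwM i hi) (hw0 i hi)
    _ = M := by rw [← mul_sum, hsum, mul_one]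

section Rate

variable {H : ℝ}

lemma rate_nonneg (hH : 0 ≤ H) (t : ℕ) : 0 ≤ (H + 1) / (H + t) := by
  positivity

lemma rate_le_one (hH : 0 ≤ H) {t : ℕ} (ht : 1 ≤ t) : (H + 1) / (H + t) ≤ 1 := by
  have : (1 : ℝ) ≤ t := by exact_mod_cast ht
  rw [div_le_one (by linarith)]
  linarith

lemma rate_mul_one_sub_le (hH : 0 ≤ H) {i : ℕ} (hi : 1 ≤ i) :
    (H + 1) / (H + i) * (1 - (H + 1) / (H + ↑(i + 1))) ≤ (H + 1) / (H + ↑(i + 1)) := by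
  have : (1 : ℝ) ≤ i := by exact_mod_cast hi
  push_cast
  have hi' : (0 : ℝ) < H + i := by linarith
  rw [show (H + 1) / (H + i) * (1 - (H + 1) / (H + (i + 1)))
      = (H + 1) / (H + (i + 1)) * (i / (H + i)) by field_simp; ring]
  exact mul_le_of_le_one_right (by positivity) ((div_le_one hi').mpr (by linarith))

lemma rate_le_two_mul_div (hH : 1 ≤ H) {t : ℕ} (ht : 1 ≤ t) :
    (H + 1) / (H + t) ≤ 2 * H / t := by
  have : (1 : ℝ) ≤ t := by exact_mod_cast ht
  rw [div_le_div_iff₀ (by linarith) (by linarith)]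
  nlinarith

end Rate

end LearningRate

open LearningRate in
theorem stmt1 (H : ℕ) (hH : 1 ≤ H)
    (α : ℕ → ℝ) (hα : ∀ t : ℕ, α t = (H + 1) / (H + t))
    (w : ℕ → ℕ → ℝ)
    (hw : ∀ t i : ℕ, w t i = α i * ∏ j ∈ Finset.Icc (i + 1) t, (1 - α j)) :
    ∀ t : ℕ, 1 ≤ t →
      (∀ i ∈ Finset.Icc 1 t, w t i ≤ 2 * H / t) ∧
      ∑ i ∈ Finset.Icc 1 t, (w t i) ^ 2 ≤ 2 * H / t := by
  intro t ht
  obtain rfl : w = weight α := funext₂ hw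
  obtain rfl : α = fun t : ℕ => ((H : ℝ) + 1) / (H + t) := funext hα
  have hH0 : (0 : ℝ) ≤ H := H.cast_nonneg
  have h1 : ∀ i : ℕ, 1 ≤ i → ((H : ℝ) + 1) / (H + i) ≤ 1 := fun _ => rate_le_one hH0
  have hα1 : ((H : ℝ) + 1) / (H + (1 : ℕ)) = 1 := by rw [Nat.cast_one, div_self (by positivity)]
  have hmax := weight_le h1 (fun _ => rate_mul_one_sub_le hH0) t
  have hsum := sum_weight_eq_one (fun t : ℕ => ((H : ℝ) + 1) / (H + t)) hα1 ht
  have hrate := rate_le_two_mul_div (show (1 : ℝ) ≤ H by exact_mod_cast hH) ht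
  refine ⟨fun i hi => (hmax i hi).trans hrate, (sum_sq_le_of_le _ ?_ hmax hsum).trans hrate⟩
  exact fun i hi => weight_nonneg (rate_nonneg hH0) h1 t (mem_Icc.mp hi).1
end

section
/- For the learning rates α_t = (H+1)/(H+t) with H ≥ 1 and weights α_t^i = α_i ∏_{j=i+1}^t (1-α_j), for every fixed i ≥ 1, the series ∑_{t=i}^∞ α_t^i converges and equals 1 + 1/H. -/
/-!
Write `P n = ∏_{j=i+1}^{i+n} (1 - α_j)` and `T n = (1 + 1/H) (H+i+n)/(H+i) · P n`.
Since `1 - α_j = (j-1)/(H+j)`, one checks `α_i P n = T n - T (n+1)`, so the series telescopes to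
`T 0 - lim T = 1 + 1/H`. The limit vanishes because `T (n+1) = T n · (i+n)/(H+i+n)` and `H ≥ 1`
make `(i+n) T n` non-increasing, whence `T n ≤ i T 0 / (i+n)`.
-/

open Filter Topology Finset

namespace LearningRate

noncomputable def rate (H : ℝ) (t : ℕ) : ℝ := (H + 1) / (H + t)

noncomputable def survival (H : ℝ) (i n : ℕ) : ℝ := ∏ j ∈ Icc (i + 1) (i + n), (1 - rate H j)

noncomputable def weightTail (H : ℝ) (i n : ℕ) : ℝ :=
  (1 + 1 / H) * ((H + i + n) / (H + i)) * survival H i n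

variable {H : ℝ}

lemma one_sub_rate (hH : 0 < H) (j : ℕ) : 1 - rate H j = (j - 1) / (H + j) := by
  have : H + j ≠ 0 := by positivity
  rw [rate]
  field_simp
  ring

lemma survival_succ (hH : 0 < H) (i n : ℕ) :
    survival H i (n + 1) = survival H i n * ((i + n) / (H + i + n + 1)) := by
  rw [survival, ← add_assoc, prod_Icc_succ_top (by omega), one_sub_rate hH, ← survival]
  push_cast
  ring

lemma survival_nonneg (hH : 0 < H) (i n : ℕ) : 0 ≤ survival H i n := by
  induction n with
  | zero => simp [survival]
  | succ n ih => rw [survival_succ hH]; positivity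

lemma weightTail_zero (hH : 0 < H) (i : ℕ) : weightTail H i 0 = 1 + 1 / H := by
  have : H + i ≠ 0 := by positivity
  simp [weightTail, survival, div_self this]

lemma weightTail_succ (hH : 0 < H) (i n : ℕ) :
    weightTail H i (n + 1) = weightTail H i n * ((i + n) / (H + i + n)) := by
  have : H + i + n ≠ 0 := by positivity
  simp only [weightTail, survival_succ hH]
  push_cast
  field_simp
  ring

lemma weightTail_nonneg (hH : 0 < H) (i n : ℕ) : 0 ≤ weightTail H i n :=
  mul_nonneg (by positivity) (survival_nonneg hH i n)

lemma rate_mul_survival (hH : 0 < H) (i n : ℕ) :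
    rate H i * survival H i n = weightTail H i n - weightTail H i (n + 1) := by
  have : H + i ≠ 0 := by positivity
  rw [weightTail_succ hH, weightTail, rate]
  field_simp
  ring

lemma natCast_add_mul_weightTail_le (hH : 1 ≤ H) (i n : ℕ) :
    (i + n) * weightTail H i n ≤ i * weightTail H i 0 := by
  have hH₀ : 0 < H := by linarith
  induction n with
  | zero => simp
  | succ n ih =>
    have hden : 0 < H + i + n := by positivity
    have hstep : (i + (n + 1) : ℝ) * ((i + n) / (H + i + n)) ≤ i + n := by
      rw [mul_div_assoc', div_le_iff₀ hden]
      nlinarith [(Nat.cast_nonneg (i + n) : (0 : ℝ) ≤ (i + n : ℕ))]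
    calc ((i : ℝ) + (n + 1 : ℕ)) * weightTail H i (n + 1)
        = (i + (n + 1)) * ((i + n) / (H + i + n)) * weightTail H i n := by
          rw [weightTail_succ hH₀]; push_cast; ring
      _ ≤ (i + n) * weightTail H i n :=
          mul_le_mul_of_nonneg_right hstep (weightTail_nonneg hH₀ i n)
      _ ≤ i * weightTail H i 0 := by exact_mod_cast ih

lemma tendsto_weightTail (hH : 1 ≤ H) {i : ℕ} (hi : 1 ≤ i) :
    Tendsto (weightTail H i) atTop (𝓝 0) := by
  have hH₀ : 0 < H := by linarith
  have hbound : Tendsto (fun n : ℕ ↦ i * weightTail H i 0 / (i + n)) atTop (𝓝 0) :=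
    tendsto_const_nhds.div_atTop
      (tendsto_atTop_add_const_left _ _ tendsto_natCast_atTop_atTop)
  refine squeeze_zero (weightTail_nonneg hH₀ i) (fun n ↦ ?_) hbound
  have : (0 : ℝ) < i + n := by positivity
  rw [le_div_iff₀ this, mul_comm]
  exact_mod_cast natCast_add_mul_weightTail_le hH i n

lemma hasSum_rate_mul_survival (hH : 1 ≤ H) {i : ℕ} (hi : 1 ≤ i) :
    HasSum (fun n ↦ rate H i * survival H i n) (1 + 1 / H) := by
  have hH₀ : 0 < H := by linarith
  have hnonneg (n : ℕ) : 0 ≤ rate H i * survival H i n :=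
    mul_nonneg (by rw [rate]; positivity) (survival_nonneg hH₀ i n)
  rw [hasSum_iff_tendsto_nat_of_nonneg hnonneg]
  simp_rw [rate_mul_survival hH₀, sum_range_sub', ← weightTail_zero hH₀ i]
  simpa using (tendsto_weightTail hH hi).const_sub (weightTail H i 0)

end LearningRate

theorem stmt2 (H : ℕ) (hH : 1 ≤ H)
    (α : ℕ → ℝ) (hα : ∀ t : ℕ, α t = (H + 1) / (H + t))
    (w : ℕ → ℕ → ℝ)
    (hw : ∀ t i : ℕ, w t i = α i * ∏ j ∈ Finset.Icc (i + 1) t, (1 - α j)) :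
    ∀ i : ℕ, 1 ≤ i → HasSum (fun n : ℕ => w (i + n) i) (1 + 1 / (H : ℝ)) := by
  intro i hi
  obtain rfl : α = LearningRate.rate H := funext hα
  simp_rw [hw]
  exact LearningRate.hasSum_rate_mul_survival (Nat.one_le_cast.mpr hH) hi
end

section
/- Let c : ℕ → ℝ≥0 and K ∈ ℕ. Suppose every c(k) is a dyadic radius 2^{-i} ≤ 1, and suppose for each r = 2^{-i} the number of distinct 'balls' of radius r is at most M(r), each selected at most 1/r² + 2 times. Then for any r₀ ∈ (0,1], ∑_{k=1}^K c(k) ≤ K·r₀ + 3·∑_{r = 2^{-i}, r ≥ r₀} M(r)/r. -/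
open scoped Classical

theorem stmt8 (K : ℕ) (hK : 1 ≤ K) (c : ℕ → ℝ) (M : ℕ → ℝ) (hM : ∀ i : ℕ, 0 ≤ M i)
    (hc : ∀ k ∈ Finset.Icc 1 K, ∃ i : ℕ, c k = (1 / 2 : ℝ) ^ i)
    (hcount : ∀ i : ℕ,
      (((Finset.Icc 1 K).filter (fun k => c k = (1 / 2 : ℝ) ^ i)).card : ℝ)
        ≤ M i * ((((1 / 2 : ℝ) ^ i)⁻¹) ^ 2 + 2))
    (r₀ : ℝ) (hr₀ : 0 < r₀) (hr₀1 : r₀ ≤ 1) :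
    ∑ k ∈ Finset.Icc 1 K, c k ≤
      K * r₀ + 3 * ∑' i : ℕ,
        (if r₀ ≤ (1 / 2 : ℝ) ^ i then M i / (1 / 2 : ℝ) ^ i else 0) := by
  obtain ⟨N, hN⟩ := exists_pow_lt_of_lt_one hr₀ (by norm_num : (1/2 : ℝ) < 1)
  set f : ℕ → ℝ := fun i => if r₀ ≤ (1/2:ℝ)^i then M i / (1/2:ℝ)^i else 0 with hf
  have hfsupp : ∀ i ∉ Finset.range N, f i = 0 := by
    intro i hi
    simp only [Finset.mem_range, not_lt] at hi
    have h2 : (1/2:ℝ)^i ≤ (1/2)^N :=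
      pow_le_pow_of_le_one (by norm_num) (by norm_num) hi
    simp only [hf]
    rw [if_neg (not_le.mpr (lt_of_le_of_lt h2 hN))]
  have htsum : ∑' i, f i = ∑ i ∈ Finset.range N, f i := tsum_eq_sum hfsupp
  set A : Finset ℕ := (Finset.Icc 1 K).filter (fun k => r₀ ≤ c k) with hA
  set B : Finset ℕ := (Finset.Icc 1 K).filter (fun k => ¬ r₀ ≤ c k) with hB
  have hsplit : ∑ k ∈ Finset.Icc 1 K, c k = ∑ k ∈ A, c k + ∑ k ∈ B, c k :=
    (Finset.sum_filter_add_sum_filter_not _ _ _).symm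
  -- bound on B
  have hBsum : ∑ k ∈ B, c k ≤ K * r₀ := by
    have h1 : ∑ k ∈ B, c k ≤ ∑ k ∈ B, r₀ := by
      apply Finset.sum_le_sum
      intro k hk
      exact le_of_lt (not_le.mp (Finset.mem_filter.mp hk).2)
    have h2 : (B.card : ℝ) ≤ K := by
      have := Finset.card_filter_le (Finset.Icc 1 K) (fun k => ¬ r₀ ≤ c k)
      have hcard : (Finset.Icc 1 K).card = K := by simp
      exact_mod_cast le_trans this (le_of_eq hcard)
    calc ∑ k ∈ B, c k ≤ ∑ k ∈ B, r₀ := h1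
      _ = B.card * r₀ := by rw [Finset.sum_const, nsmul_eq_mul]
      _ ≤ K * r₀ := by nlinarith
  -- strict antitonicity of (1/2)^·
  have hanti : StrictAnti (fun i : ℕ => (1/2:ℝ)^i) := fun i j hij =>
    pow_lt_pow_right_of_lt_one₀ (by norm_num) (by norm_num) hij
  -- A as a disjoint union
  have hAeq : A = (Finset.range N).biUnion
      (fun i => A.filter (fun k => c k = (1/2:ℝ)^i)) := by
    ext k
    simp only [Finset.mem_biUnion, Finset.mem_filter, Finset.mem_range]
    constructor
    · intro hk
      obtain ⟨i, hi⟩ := hc k (Finset.mem_filter.mp hk).1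
      have hr : r₀ ≤ c k := (Finset.mem_filter.mp hk).2
      refine ⟨i, ?_, hk, hi⟩
      by_contra hcon
      push_neg at hcon
      have : (1/2:ℝ)^i ≤ (1/2)^N :=
        pow_le_pow_of_le_one (by norm_num) (by norm_num) hcon
      rw [hi] at hr
      linarith [lt_of_le_of_lt this hN]
    · rintro ⟨i, _, hk, _⟩
      exact hk
  have hdisj : ∀ i ∈ Finset.range N, ∀ j ∈ Finset.range N, i ≠ j →
      Disjoint (A.filter (fun k => c k = (1/2:ℝ)^i))
        (A.filter (fun k => c k = (1/2:ℝ)^j)) := by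
    intro i _ j _ hij
    rw [Finset.disjoint_left]
    intro k hk1 hk2
    have h1 := (Finset.mem_filter.mp hk1).2
    have h2 := (Finset.mem_filter.mp hk2).2
    exact hij (hanti.injective (h1 ▸ h2 : (1/2:ℝ)^i = (1/2:ℝ)^j))
  have hAsum : ∑ k ∈ A, c k ≤ 3 * ∑ i ∈ Finset.range N, f i := by
    rw [hAeq, Finset.sum_biUnion hdisj, Finset.mul_sum]
    apply Finset.sum_le_sum
    intro i _
    by_cases hri : r₀ ≤ (1/2:ℝ)^i
    · have hsum_eq : ∑ k ∈ A.filter (fun k => c k = (1/2:ℝ)^i), c k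
          = (A.filter (fun k => c k = (1/2:ℝ)^i)).card * (1/2:ℝ)^i := by
        rw [Finset.sum_congr rfl (fun k hk => (Finset.mem_filter.mp hk).2),
          Finset.sum_const, nsmul_eq_mul]
      have hsub : A.filter (fun k => c k = (1/2:ℝ)^i)
          ⊆ (Finset.Icc 1 K).filter (fun k => c k = (1/2:ℝ)^i) := by
        intro k hk
        simp only [Finset.mem_filter] at hk ⊢
        exact ⟨(Finset.mem_filter.mp hk.1).1, hk.2⟩
      have hcard : ((A.filter (fun k => c k = (1/2:ℝ)^i)).card : ℝ)
          ≤ M i * ((((1/2:ℝ)^i)⁻¹)^2 + 2) := by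
        refine le_trans ?_ (hcount i)
        exact_mod_cast Finset.card_le_card hsub
      have hpow_pos : (0:ℝ) < (1/2:ℝ)^i := by positivity
      have hone : (1:ℝ) ≤ ((1/2:ℝ)^i)⁻¹ := by
        rw [show ((1/2:ℝ)^i)⁻¹ = 2^i by rw [← inv_pow]; norm_num]
        exact one_le_pow₀ (by norm_num)
      have hsq : (1:ℝ) ≤ (((1/2:ℝ)^i)⁻¹)^2 := one_le_pow₀ hone
      have hbound : M i * ((((1/2:ℝ)^i)⁻¹)^2 + 2) * (1/2:ℝ)^i
          ≤ 3 * (M i / (1/2:ℝ)^i) := by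
        have key : M i * ((((1/2:ℝ)^i)⁻¹)^2 + 2) ≤ 3 * M i * (((1/2:ℝ)^i)⁻¹)^2 := by
          nlinarith [hM i]
        have : M i * ((((1/2:ℝ)^i)⁻¹)^2 + 2) * (1/2:ℝ)^i
            ≤ 3 * M i * (((1/2:ℝ)^i)⁻¹)^2 * (1/2:ℝ)^i := by
          nlinarith
        refine le_trans this (le_of_eq ?_)
        field_simp
      rw [hsum_eq]
      simp only [hf]
      rw [if_pos hri]
      calc ((A.filter (fun k => c k = (1/2:ℝ)^i)).card : ℝ) * (1/2:ℝ)^i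
          ≤ M i * ((((1/2:ℝ)^i)⁻¹)^2 + 2) * (1/2:ℝ)^i := by nlinarith
        _ ≤ 3 * (M i / (1/2:ℝ)^i) := hbound
    · have hempty : A.filter (fun k => c k = (1/2:ℝ)^i) = ∅ := by
        apply Finset.filter_false_of_mem
        intro k hk
        intro hck
        have hr : r₀ ≤ c k := (Finset.mem_filter.mp hk).2
        rw [hck] at hr
        exact hri hr
      rw [hempty]
      simp only [hf]
      rw [if_neg hri]
      simp
  calc ∑ k ∈ Finset.Icc 1 K, c k = ∑ k ∈ A, c k + ∑ k ∈ B, c k := hsplit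
    _ ≤ 3 * ∑ i ∈ Finset.range N, f i + K * r₀ := add_le_add hAsum hBsum
    _ = K * r₀ + 3 * ∑' i, f i := by rw [htsum]; ring
end

section
/- For nonnegative reals with ∑_{i=1}^t α_t^i · u_i where u_i = c/√i and α_t^i are the weights from learning rate α_t = (H+1)/(H+t), we have c/√t ≤ ∑_{i=1}^t α_t^i u_i ≤ 2c/√t for every t ≥ 1 and every c ≥ 0. -/
/-!
Write `S t = ∑_{i ≤ t} α_t^i u_i`. Peeling off the last weight gives the recursion
`S (t+1) = α_{t+1} u_{t+1} + (1 - α_{t+1}) S t` with `S 1 = u 1` (as `α_1 = 1`), and since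
`α_{t+1} ≤ 1` the right-hand side is monotone in `S t`. Both bounds therefore follow by
induction as soon as they are compatible with one step of the recursion. For the lower bound
`u_t` this is the monotonicity of `u`; for the upper bound `2c/√t`, after clearing
denominators, it is `2 √t √(t+1) ≤ H + 2t + 1`, which holds by AM-GM.
-/

open Finset Real

noncomputable def learningRateAverage (α u : ℕ → ℝ) (t : ℕ) : ℝ :=
  ∑ i ∈ Icc 1 t, α i * (∏ j ∈ Icc (i + 1) t, (1 - α j)) * u i

namespace learningRateAverage

variable (α u : ℕ → ℝ)

theorem succ (t : ℕ) :
    learningRateAverage α u (t + 1) =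
      α (t + 1) * u (t + 1) + (1 - α (t + 1)) * learningRateAverage α u t := by
  have hprod : ∀ i ∈ Icc 1 t,
      ∏ j ∈ Icc (i + 1) (t + 1), (1 - α j) = (∏ j ∈ Icc (i + 1) t, (1 - α j)) * (1 - α (t + 1)) :=
    fun i hi ↦ prod_Icc_succ_top (by simp at hi; omega) _
  rw [learningRateAverage, sum_Icc_succ_top (by omega), sum_congr rfl fun i hi ↦ by rw [hprod i hi],
    Icc_eq_empty (a := t + 1 + 1) (b := t + 1) (by omega), prod_empty, learningRateAverage,
    mul_sum, add_comm]
  congr 1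
  · ring
  · exact sum_congr rfl fun _ _ ↦ by ring

theorem one : learningRateAverage α u 1 = α 1 * u 1 := by
  simp [learningRateAverage]

variable {α u}

theorem le_of_step {v : ℕ → ℝ} (hα : ∀ t, α (t + 1) ≤ 1) (h₁ : learningRateAverage α u 1 ≤ v 1)
    (hv : ∀ t, 1 ≤ t → α (t + 1) * u (t + 1) + (1 - α (t + 1)) * v t ≤ v (t + 1)) :
    ∀ t, 1 ≤ t → learningRateAverage α u t ≤ v t := by
  intro t ht
  induction t, ht using Nat.le_induction with
  | base => exact h₁
  | succ t ht ih =>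
    have := sub_nonneg.2 (hα t)
    calc learningRateAverage α u (t + 1)
        = α (t + 1) * u (t + 1) + (1 - α (t + 1)) * learningRateAverage α u t := succ α u t
      _ ≤ α (t + 1) * u (t + 1) + (1 - α (t + 1)) * v t := by gcongr
      _ ≤ v (t + 1) := hv t ht

theorem ge_of_antitone (hα₁ : α 1 = 1) (hα : ∀ t, α (t + 1) ≤ 1)
    (hu : ∀ t, 1 ≤ t → u (t + 1) ≤ u t) : ∀ t, 1 ≤ t → u t ≤ learningRateAverage α u t := by
  intro t ht
  induction t, ht using Nat.le_induction with
  | base => rw [one, hα₁, one_mul]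
  | succ t ht ih =>
    have := sub_nonneg.2 (hα t)
    calc u (t + 1)
        = α (t + 1) * u (t + 1) + (1 - α (t + 1)) * u (t + 1) := by ring
      _ ≤ α (t + 1) * u (t + 1) + (1 - α (t + 1)) * learningRateAverage α u t := by
        gcongr
        exact (hu t ht).trans ih
      _ = learningRateAverage α u (t + 1) := (succ α u t).symm

end learningRateAverage

theorem rate_mul_div_sqrt_add_le_two_mul_div_sqrt {H t c : ℝ} (hH : 0 ≤ H) (ht : 0 < t)
    (hc : 0 ≤ c) :
    (H + 1) / (H + (t + 1)) * (c / √(t + 1)) + (1 - (H + 1) / (H + (t + 1))) * (2 * c / √t)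
      ≤ 2 * c / √(t + 1) := by
  have hs2 : √t ^ 2 = t := sq_sqrt ht.le
  have hr2 : √(t + 1) ^ 2 = t + 1 := sq_sqrt (by linarith)
  have amgm : 2 * (√t * √(t + 1)) ≤ 2 * t + 1 := by
    nlinarith [sq_nonneg (√t - √(t + 1))]
  have gap : 2 * c / √(t + 1) -
      ((H + 1) / (H + (t + 1)) * (c / √(t + 1)) + (1 - (H + 1) / (H + (t + 1))) * (2 * c / √t))
      = c * (H + 2 * t + 1 - 2 * (√t * √(t + 1))) / ((H + (t + 1)) * √(t + 1)) := by
    field_simp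
    linear_combination (2 * c * √(t + 1)) * hs2
  have hnum : 0 ≤ H + 2 * t + 1 - 2 * (√t * √(t + 1)) := by linarith
  rw [← sub_nonneg, gap]
  positivity

theorem stmt15_general (H : ℕ)
    (α : ℕ → ℝ) (hα : ∀ t : ℕ, α t = (H + 1) / (H + t))
    (w : ℕ → ℕ → ℝ)
    (hw : ∀ t i : ℕ, w t i = α i * ∏ j ∈ Finset.Icc (i + 1) t, (1 - α j))
    (c : ℝ) (hc : 0 ≤ c) (u : ℕ → ℝ) (hu : ∀ i : ℕ, u i = c / Real.sqrt i) :
    ∀ t : ℕ, 1 ≤ t →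
      c / Real.sqrt t ≤ ∑ i ∈ Finset.Icc 1 t, w t i * u i ∧
      ∑ i ∈ Finset.Icc 1 t, w t i * u i ≤ 2 * c / Real.sqrt t := by
  have hsum : ∀ t, ∑ i ∈ Icc 1 t, w t i * u i = learningRateAverage α u t := fun t ↦ by
    simp only [hw, learningRateAverage]
  have hα₁ : α 1 = 1 := by
    rw [hα, Nat.cast_one]
    exact div_self (by positivity)
  have hα_le : ∀ t, α (t + 1) ≤ 1 := fun t ↦ by
    rw [hα, div_le_one (by positivity), Nat.cast_succ]
    linarith [t.cast_nonneg (α := ℝ)]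
  have hu_anti : ∀ t, 1 ≤ t → u (t + 1) ≤ u t := fun t ht ↦ by
    rw [hu, hu]
    gcongr
    simp
  intro t ht
  rw [hsum, ← hu]
  refine ⟨learningRateAverage.ge_of_antitone hα₁ hα_le hu_anti t ht,
    learningRateAverage.le_of_step (v := fun t ↦ 2 * c / √t) hα_le ?_ ?_ t ht⟩
  · simp only [learningRateAverage.one, hα₁, hu, one_mul, Nat.cast_one, sqrt_one, div_one]
    linarith
  · intro t ht
    rw [hu, hα, Nat.cast_succ]
    exact rate_mul_div_sqrt_add_le_two_mul_div_sqrt H.cast_nonneg (by exact_mod_cast ht) hc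

theorem stmt15 (H : ℕ) (hH : 1 ≤ H)
    (α : ℕ → ℝ) (hα : ∀ t : ℕ, α t = (H + 1) / (H + t))
    (w : ℕ → ℕ → ℝ)
    (hw : ∀ t i : ℕ, w t i = α i * ∏ j ∈ Finset.Icc (i + 1) t, (1 - α j))
    (c : ℝ) (hc : 0 ≤ c) (u : ℕ → ℝ) (hu : ∀ i : ℕ, u i = c / Real.sqrt i) :
    ∀ t : ℕ, 1 ≤ t →
      c / Real.sqrt t ≤ ∑ i ∈ Finset.Icc 1 t, w t i * u i ∧
      ∑ i ∈ Finset.Icc 1 t, w t i * u i ≤ 2 * c / Real.sqrt t :=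
  stmt15_general H α hα w hw c hc u hu
end

section
/- Let V, Q : S × A → ℝ with Q^⋆ L-Lipschitz on the product metric space X = S × A and bounded above by H. Suppose Q̂ : Balls → ℝ satisfies Q̂(B) ≥ Q^⋆(center of B) for all balls B in a finite collection covering X via their domains, and define index(B) = L·rad(B) + min over balls B' of radius ≥ rad(B) of (Q̂(B') + L·dist(center B, center B')). Then for every s ∈ S, min(H, max over balls B relevant to s of index(B)) ≥ max_a Q^⋆(s, a). -/
theorem stmt18 {S A : Type*} [MetricSpace S] [MetricSpace A]
    (L Hval : ℝ) (hL : 0 ≤ L)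
    (Qstar : S × A → ℝ)
    (hLip : ∀ p q : S × A, |Qstar p - Qstar q| ≤ L * dist p q)
    (hbdd : ∀ p : S × A, Qstar p ≤ Hval)
    {ι : Type*} (𝔅 : Finset ι) (x : ι → S × A) (ρ : ι → ℝ)
    (Qhat : ι → ℝ)
    (dom : ι → Set (S × A))
    (hdom : ∀ b : ι, dom b = {p | dist p (x b) ≤ ρ b ∧
      ∀ b' ∈ 𝔅, ρ b' < ρ b → ¬ dist p (x b') ≤ ρ b'})
    (hcover : ∀ p : S × A, ∃ b ∈ 𝔅, p ∈ dom b)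
    (hopt : ∀ b ∈ 𝔅, Qstar (x b) ≤ Qhat b)
    (index : ι → ℝ)
    (hindex : ∀ b : ι, index b = L * ρ b +
      sInf {y : ℝ | ∃ b' ∈ 𝔅, ρ b ≤ ρ b' ∧ y = Qhat b' + L * dist (x b) (x b')}) :
    ∀ s : S, ∀ a : A,
      Qstar (s, a) ≤
        min Hval (sSup {y : ℝ | ∃ b ∈ 𝔅, (∃ a' : A, (s, a') ∈ dom b) ∧ y = index b}) := by
  intro s a
  refine le_min (hbdd _) ?_
  obtain ⟨b, hb, hmem⟩ := hcover (s, a)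
  have hdist : dist ((s, a) : S × A) (x b) ≤ ρ b := by
    rw [hdom b] at hmem; exact hmem.1
  -- the sup set
  set T : Set ℝ := {y : ℝ | ∃ b ∈ 𝔅, (∃ a' : A, (s, a') ∈ dom b) ∧ y = index b} with hT
  have hTsub : T ⊆ ↑(𝔅.image index) := by
    rintro y ⟨b', hb', _, rfl⟩
    simpa using Finset.mem_image_of_mem index hb'
  have hTbdd : BddAbove T := (𝔅.image index).bddAbove.mono hTsub
  have hTmem : index b ∈ T := ⟨b, hb, ⟨a, hmem⟩, rfl⟩
  refine le_trans ?_ (le_csSup hTbdd hTmem)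
  rw [hindex b]
  have hne : (Qhat b + L * dist (x b) (x b)) ∈
      {y : ℝ | ∃ b' ∈ 𝔅, ρ b ≤ ρ b' ∧ y = Qhat b' + L * dist (x b) (x b')} :=
    ⟨b, hb, le_refl _, rfl⟩
  have hlb : Qstar (s, a) - L * ρ b ≤
      sInf {y : ℝ | ∃ b' ∈ 𝔅, ρ b ≤ ρ b' ∧ y = Qhat b' + L * dist (x b) (x b')} := by
    refine le_csInf ⟨_, hne⟩ ?_
    rintro y ⟨b', hb', _, rfl⟩
    have h1 : Qstar (s, a) - Qstar (x b') ≤ L * dist ((s, a) : S × A) (x b') :=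
      le_trans (le_abs_self _) (hLip _ _)
    have h2 : dist ((s, a) : S × A) (x b') ≤ ρ b + dist (x b) (x b') :=
      le_trans (dist_triangle _ (x b) _) (by linarith [hdist])
    have h3 : L * dist ((s, a) : S × A) (x b') ≤ L * (ρ b + dist (x b) (x b')) :=
      mul_le_mul_of_nonneg_left h2 hL
    have h4 := hopt b' hb'
    nlinarith
  linarith
end
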